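/- arXiv:2112.14162 — 3 statements merged into one kernel-verified Lean document; each statement's English description precedes it below -/
import Mathlib

section
/- Let f ∈ C²([a,b]) with m₂ ≤ f'' ≤ M₂ on [a,b]. For every x ∈ [a,b], |f(x) - [Π(f)(x) - ((f'(b)-f'(a))/(2(b-a)))·(b-x)(x-a)]| ≤ (b-a)²(M₂-m₂)/32, where Π(f) is the linear Lagrange interpolant of f at a and b. -/
/-!
Write `E(p, q) = f q - f p - (q - p) (f' p + f' q) / 2` for the trapezoid-rule error of `f'`
on `[p, q]`. The corrected interpolation error at `x` is `((b - x) E(a, x) - (x - a) E(x, b)) / (b - a)`.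
Integrating by parts, `E(p, q) = ∫_p^q ((p + q) / 2 - t) f''(t) dt`; the kernel is odd about the
midpoint and each half has mass `(q - p)² / 8`, so `|E(p, q)| ≤ (M₂ - m₂) (q - p)² / 8`.
Hence the error is at most `(M₂ - m₂) (x - a) (b - x) / 8 ≤ (M₂ - m₂) (b - a)² / 32`.
-/

open Set intervalIntegral
open MeasureTheory (volume)

theorem integral_mul_mem_Icc_of_nonneg {w φ : ℝ → ℝ} {p q m M : ℝ} (hpq : p ≤ q)
    (hw : ContinuousOn w (Icc p q)) (hw₀ : ∀ t ∈ Icc p q, 0 ≤ w t)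
    (hφ : IntervalIntegrable φ volume p q)
    (hm : ∀ t ∈ Icc p q, m ≤ φ t) (hM : ∀ t ∈ Icc p q, φ t ≤ M) :
    ∫ t in p..q, w t * φ t ∈ Icc (m * ∫ t in p..q, w t) (M * ∫ t in p..q, w t) := by
  rw [← uIcc_of_le hpq] at hw
  have hwφ : IntervalIntegrable (fun t => w t * φ t) volume p q := hφ.continuousOn_mul hw
  have hwi : IntervalIntegrable w volume p q := hw.intervalIntegrable
  rw [← integral_const_mul, ← integral_const_mul]
  exact ⟨integral_mono_on hpq (hwi.const_mul m) hwφ fun t ht => by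
      rw [mul_comm]; exact mul_le_mul_of_nonneg_left (hm t ht) (hw₀ t ht),
    integral_mono_on hpq hwφ (hwi.const_mul M) fun t ht => by
      rw [mul_comm M]; exact mul_le_mul_of_nonneg_left (hM t ht) (hw₀ t ht)⟩

theorem abs_integral_midpoint_sub_mul_le {φ : ℝ → ℝ} {p q m M : ℝ} (hpq : p ≤ q)
    (hφ : IntervalIntegrable φ volume p q)
    (hm : ∀ t ∈ Icc p q, m ≤ φ t) (hM : ∀ t ∈ Icc p q, φ t ≤ M) :
    |∫ t in p..q, ((p + q) / 2 - t) * φ t| ≤ (M - m) / 8 * (q - p) ^ 2 := by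
  set c := (p + q) / 2 with hc
  have hpc : p ≤ c := by linarith
  have hcq : c ≤ q := by linarith
  have hsub₁ : Icc p c ⊆ Icc p q := Icc_subset_Icc_right hcq
  have hsub₂ : Icc c q ⊆ Icc p q := Icc_subset_Icc_left hpc
  have hφ₁ : IntervalIntegrable φ volume p c :=
    hφ.mono_set (by rw [uIcc_of_le hpc, uIcc_of_le hpq]; exact hsub₁)
  have hφ₂ : IntervalIntegrable φ volume c q :=
    hφ.mono_set (by rw [uIcc_of_le hcq, uIcc_of_le hpq]; exact hsub₂)
  have hW₁ : ∫ t in p..c, (c - t) = (q - p) ^ 2 / 8 := by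
    rw [integral_comp_sub_left (fun t => t), integral_id, hc]; ring
  have hW₂ : ∫ t in c..q, (t - c) = (q - p) ^ 2 / 8 := by
    rw [integral_comp_sub_right (fun t => t), integral_id, hc]; ring
  obtain ⟨h₁, h₁'⟩ := integral_mul_mem_Icc_of_nonneg hpc (w := fun t => c - t)
    (by fun_prop) (fun t ht => sub_nonneg.2 ht.2) hφ₁
    (fun t ht => hm t (hsub₁ ht)) (fun t ht => hM t (hsub₁ ht))
  obtain ⟨h₂, h₂'⟩ := integral_mul_mem_Icc_of_nonneg hcq (w := fun t => t - c)
    (by fun_prop) (fun t ht => sub_nonneg.2 ht.1) hφ₂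
    (fun t ht => hm t (hsub₂ ht)) (fun t ht => hM t (hsub₂ ht))
  have hsplit : ∫ t in p..q, (c - t) * φ t
      = (∫ t in p..c, (c - t) * φ t) - ∫ t in c..q, (t - c) * φ t := by
    rw [← integral_add_adjacent_intervals (b := c), sub_eq_add_neg, ← integral_neg]
    · simp only [← neg_mul, neg_sub]
    · exact hφ₁.continuousOn_mul (by fun_prop)
    · exact hφ₂.continuousOn_mul (by fun_prop)
  simp only [hW₁, hW₂] at h₁ h₁' h₂ h₂'
  rw [hsplit, abs_le]
  constructor <;> linarith

theorem trapezoid_error_eq_integral {f f' f'' : ℝ → ℝ} {p q : ℝ} (hpq : p ≤ q)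
    (hf : ∀ t ∈ Icc p q, HasDerivWithinAt f (f' t) (Icc p q) t)
    (hf' : ∀ t ∈ Icc p q, HasDerivWithinAt f' (f'' t) (Icc p q) t)
    (hf'' : IntervalIntegrable f'' volume p q) :
    f q - f p - (q - p) * (f' p + f' q) / 2 = ∫ t in p..q, ((p + q) / 2 - t) * f'' t := by
  have hG : ∀ t ∈ Icc p q, HasDerivWithinAt (fun t => ((p + q) / 2 - t) * f' t + f t)
      (((p + q) / 2 - t) * f'' t) (Icc p q) t := by
    intro t ht
    exact ((((hasDerivWithinAt_id t _).const_sub _).mul (hf' t ht)).add (hf t ht)).congr_deriv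
      (by simp only [id]; ring)
  rw [integral_eq_sub_of_hasDerivAt_of_le hpq
    (fun t ht => (hG t ht).continuousWithinAt)
    (fun t ht => (hG t (Ioo_subset_Icc_self ht)).hasDerivAt (Icc_mem_nhds ht.1 ht.2))
    (hf''.continuousOn_mul (by fun_prop))]
  ring

theorem abs_trapezoid_error_le {f f' f'' : ℝ → ℝ} {p q m M : ℝ} (hpq : p ≤ q)
    (hf : ∀ t ∈ Icc p q, HasDerivWithinAt f (f' t) (Icc p q) t)
    (hf' : ∀ t ∈ Icc p q, HasDerivWithinAt f' (f'' t) (Icc p q) t)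
    (hf'' : IntervalIntegrable f'' volume p q)
    (hm : ∀ t ∈ Icc p q, m ≤ f'' t) (hM : ∀ t ∈ Icc p q, f'' t ≤ M) :
    |f q - f p - (q - p) * (f' p + f' q) / 2| ≤ (M - m) / 8 * (q - p) ^ 2 := by
  rw [trapezoid_error_eq_integral hpq hf hf' hf'']
  exact abs_integral_midpoint_sub_mul_le hpq hf'' hm hM

theorem abs_weighted_sub_div_le {a b x E₁ E₂ D : ℝ} (hab : a < b) (hax : a ≤ x) (hxb : x ≤ b)
    (hD : 0 ≤ D) (h₁ : |E₁| ≤ D * (x - a) ^ 2) (h₂ : |E₂| ≤ D * (b - x) ^ 2) :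
    |((b - x) * E₁ - (x - a) * E₂) / (b - a)| ≤ D * (b - a) ^ 2 / 4 := by
  have hba : 0 < b - a := sub_pos.2 hab
  rw [abs_div, abs_of_pos hba, div_le_iff₀ hba]
  calc |(b - x) * E₁ - (x - a) * E₂|
      ≤ (b - x) * |E₁| + (x - a) * |E₂| := by
        refine (abs_sub _ _).trans_eq ?_
        rw [abs_mul, abs_mul, abs_of_nonneg (sub_nonneg.2 hxb), abs_of_nonneg (sub_nonneg.2 hax)]
    _ ≤ D * ((x - a) * (b - x)) * (b - a) := by
        nlinarith [mul_le_mul_of_nonneg_left h₁ (sub_nonneg.2 hxb),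
          mul_le_mul_of_nonneg_left h₂ (sub_nonneg.2 hax)]
    _ ≤ D * ((b - a) ^ 2 / 4) * (b - a) := by
        gcongr
        nlinarith [sq_nonneg (a + b - 2 * x)]
    _ = D * (b - a) ^ 2 / 4 * (b - a) := by ring

theorem corrected_interpolation_error
    (a b m₂ M₂ : ℝ) (f f' f'' : ℝ → ℝ) (hab : a < b)
    (hf' : ∀ x ∈ Set.Icc a b, HasDerivWithinAt f (f' x) (Set.Icc a b) x)
    (hf'' : ∀ x ∈ Set.Icc a b, HasDerivWithinAt f' (f'' x) (Set.Icc a b) x)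
    (hcont : ContinuousOn f'' (Set.Icc a b))
    (hm : ∀ x ∈ Set.Icc a b, m₂ ≤ f'' x)
    (hM : ∀ x ∈ Set.Icc a b, f'' x ≤ M₂)
    (x : ℝ) (hx : x ∈ Set.Icc a b) :
    |f x - ((f a * (x - b) / (a - b) + f b * (x - a) / (b - a))
        - ((f' b - f' a) / (2 * (b - a))) * (b - x) * (x - a))|
      ≤ (b - a) ^ 2 * (M₂ - m₂) / 32 := by
  obtain ⟨hax, hxb⟩ := hx
  have trapezoid {p q : ℝ} (hpq : p ≤ q) (hsub : Icc p q ⊆ Icc a b) :=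
    abs_trapezoid_error_le hpq (fun t ht => (hf' t (hsub ht)).mono hsub)
      (fun t ht => (hf'' t (hsub ht)).mono hsub) ((hcont.mono hsub).intervalIntegrable_of_Icc hpq)
      (fun t ht => hm t (hsub ht)) (fun t ht => hM t (hsub ht))
  have hD : 0 ≤ (M₂ - m₂) / 8 := by
    linarith [hm a ⟨le_rfl, hab.le⟩, hM a ⟨le_rfl, hab.le⟩]
  have hcombination : f x - ((f a * (x - b) / (a - b) + f b * (x - a) / (b - a))
        - ((f' b - f' a) / (2 * (b - a))) * (b - x) * (x - a))
      = ((b - x) * (f x - f a - (x - a) * (f' a + f' x) / 2)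
        - (x - a) * (f b - f x - (b - x) * (f' x + f' b) / 2)) / (b - a) := by
    field_simp [(sub_pos.2 hab).ne', (sub_neg.2 hab).ne]
    ring
  rw [hcombination]
  refine (abs_weighted_sub_div_le hab hax hxb hD (trapezoid hax (Icc_subset_Icc_right hxb))
    (trapezoid hxb (Icc_subset_Icc_left hax))).trans_eq ?_
  ring
end

section
/- Let f ∈ C²([a,b]) with m₂ ≤ f'' ≤ M₂ on [a,b] and f'(a) = f'(b). Then for all x ∈ [a,b], the P₁-Lagrange interpolation error satisfies |Π(f)(x) - f(x)| ≤ (b-a)²(M₂-m₂)/32. -/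
/-!
Multiplied by `b - a`, the interpolation error at `x` is `∫ K f''` for the Peano kernel
`K t = min ((b - x)(t - a)) ((x - a)(b - t))`. Because `f'(a) = f'(b)`, `f''` has integral zero,
so `K` may be replaced by `K - c` with `c = (x - a)(b - x)/2` its mean value; as `K - c` has mean
zero, `f''` may in turn be replaced by `f'' - (m₂ + M₂)/2`, which is bounded by `(M₂ - m₂)/2`.
This gives the bound `(M₂ - m₂)/2 · ∫ |K - c| = (M₂ - m₂)(x - a)(b - x)(b - a)/8`, and
`(x - a)(b - x) ≤ (b - a)²/4`.
-/

open Set intervalIntegral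

section Calculus

variable {u v : ℝ} {s : Set ℝ}

theorem integral_eq_sub_of_hasDerivWithinAt {G G' : ℝ → ℝ} (huv : u ≤ v) (hs : Icc u v ⊆ s)
    (hG : ∀ t ∈ s, HasDerivWithinAt G (G' t) s t) (hG' : ContinuousOn G' s) :
    ∫ t in u..v, G' t = G v - G u :=
  integral_eq_sub_of_hasDerivAt_of_le huv
    (fun t ht => (hG t (hs ht)).continuousWithinAt.mono hs)
    (fun t ht => (hG t (hs (Ioo_subset_Icc_self ht))).hasDerivAt
      (Filter.mem_of_superset (Icc_mem_nhds ht.1 ht.2) hs))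
    ((hG'.mono hs).intervalIntegrable_of_Icc huv)

variable {f f' f'' : ℝ → ℝ}

theorem integral_sub_left_mul_eq (huv : u ≤ v) (hs : Icc u v ⊆ s)
    (hf' : ∀ t ∈ s, HasDerivWithinAt f (f' t) s t)
    (hf'' : ∀ t ∈ s, HasDerivWithinAt f' (f'' t) s t) (hcont : ContinuousOn f'' s) :
    ∫ t in u..v, (t - u) * f'' t = (v - u) * f' v - (f v - f u) := by
  have hG : ∀ t ∈ s, HasDerivWithinAt (fun t => (t - u) * f' t - f t) ((t - u) * f'' t) s t :=
    fun t ht => ((((hasDerivWithinAt_id t s).sub_const u).mul (hf'' t ht)).sub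
      (hf' t ht)).congr_deriv (by simp only [id]; ring)
  rw [integral_eq_sub_of_hasDerivWithinAt huv hs hG (by fun_prop)]
  ring

theorem integral_right_sub_mul_eq (huv : u ≤ v) (hs : Icc u v ⊆ s)
    (hf' : ∀ t ∈ s, HasDerivWithinAt f (f' t) s t)
    (hf'' : ∀ t ∈ s, HasDerivWithinAt f' (f'' t) s t) (hcont : ContinuousOn f'' s) :
    ∫ t in u..v, (v - t) * f'' t = f v - f u - (v - u) * f' u := by
  have hG : ∀ t ∈ s, HasDerivWithinAt (fun t => (v - t) * f' t + f t) ((v - t) * f'' t) s t :=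
    fun t ht => ((((hasDerivWithinAt_id t s).const_sub v).mul (hf'' t ht)).add
      (hf' t ht)).congr_deriv (by simp only [id]; ring)
  rw [integral_eq_sub_of_hasDerivWithinAt huv hs hG (by fun_prop)]
  ring

end Calculus

theorem integral_abs_sub_midpoint {u v : ℝ} (huv : u ≤ v) :
    ∫ t in u..v, |t - (u + v) / 2| = (v - u) ^ 2 / 4 := by
  set m := (u + v) / 2 with hm
  have hint : ∀ p q : ℝ, IntervalIntegrable (fun t => |t - m|) MeasureTheory.volume p q :=
    fun p q => (by fun_prop : Continuous fun t : ℝ => |t - m|).intervalIntegrable p q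
  have left : ∫ t in u..m, |t - m| = ∫ t in u..m, -(t - m) := by
    refine integral_congr fun t ht => ?_
    rw [uIcc_of_le (by linarith)] at ht
    exact abs_of_nonpos (by linarith [ht.2])
  have right : ∫ t in m..v, |t - m| = ∫ t in m..v, (t - m) := by
    refine integral_congr fun t ht => ?_
    rw [uIcc_of_le (by linarith)] at ht
    exact abs_of_nonneg (by linarith [ht.1])
  rw [← integral_add_adjacent_intervals (hint u m) (hint m v), left, right, integral_neg]
  simp only [integral_comp_sub_right fun t => t, integral_id, hm]
  ring

def peanoKernel (a b x t : ℝ) : ℝ :=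
  min ((b - x) * (t - a)) ((x - a) * (b - t))

section PeanoKernel

variable {a b x : ℝ}

theorem peanoKernel_of_le {t : ℝ} (hab : a ≤ b) (ht : t ≤ x) :
    peanoKernel a b x t = (b - x) * (t - a) :=
  min_eq_left (by nlinarith)

theorem peanoKernel_of_ge {t : ℝ} (hab : a ≤ b) (ht : x ≤ t) :
    peanoKernel a b x t = (x - a) * (b - t) :=
  min_eq_right (by nlinarith)

theorem continuous_peanoKernel : Continuous (peanoKernel a b x) := by
  unfold peanoKernel
  fun_prop

theorem integral_comp_peanoKernel (g : ℝ → ℝ → ℝ) (hx : x ∈ Icc a b)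
    (hg : ContinuousOn (fun t => g t (peanoKernel a b x t)) (Icc a b)) :
    ∫ t in a..b, g t (peanoKernel a b x t) =
      (∫ t in a..x, g t ((b - x) * (t - a))) + ∫ t in x..b, g t ((x - a) * (b - t)) := by
  have hab : a ≤ b := hx.1.trans hx.2
  rw [← integral_add_adjacent_intervals
    ((hg.mono (Icc_subset_Icc_right hx.2)).intervalIntegrable_of_Icc hx.1)
    ((hg.mono (Icc_subset_Icc_left hx.1)).intervalIntegrable_of_Icc hx.2)]
  congr 1 <;> refine integral_congr fun t ht => ?_
  · rw [uIcc_of_le hx.1] at ht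
    simp only [peanoKernel_of_le hab ht.2]
  · rw [uIcc_of_le hx.2] at ht
    simp only [peanoKernel_of_ge hab ht.1]

theorem integral_peanoKernel (hx : x ∈ Icc a b) :
    ∫ t in a..b, peanoKernel a b x t = (x - a) * (b - x) / 2 * (b - a) := by
  rw [integral_comp_peanoKernel (fun _ y => y) hx continuous_peanoKernel.continuousOn]
  simp only [integral_const_mul, integral_comp_sub_right fun t => t,
    integral_comp_sub_left fun t => t, integral_id]
  ring

theorem integral_abs_peanoKernel_sub_mean (hx : x ∈ Icc a b) :
    ∫ t in a..b, |peanoKernel a b x t - (x - a) * (b - x) / 2| =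
      (x - a) * (b - x) * (b - a) / 4 := by
  rw [integral_comp_peanoKernel (fun _ y => |y - (x - a) * (b - x) / 2|) hx
    (continuous_peanoKernel.sub continuous_const).abs.continuousOn]
  have left (t : ℝ) :
      |(b - x) * (t - a) - (x - a) * (b - x) / 2| = (b - x) * |t - (a + x) / 2| := by
    rw [show (b - x) * (t - a) - (x - a) * (b - x) / 2 = (b - x) * (t - (a + x) / 2) by ring,
      abs_mul, abs_of_nonneg (sub_nonneg.2 hx.2)]
  have right (t : ℝ) :
      |(x - a) * (b - t) - (x - a) * (b - x) / 2| = (x - a) * |t - (x + b) / 2| := by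
    rw [show (x - a) * (b - t) - (x - a) * (b - x) / 2 = -((x - a) * (t - (x + b) / 2)) by ring,
      abs_neg, abs_mul, abs_of_nonneg (sub_nonneg.2 hx.1)]
  simp only [left, right, integral_const_mul, integral_abs_sub_midpoint hx.1,
    integral_abs_sub_midpoint hx.2]
  ring

theorem interpolation_error_eq_integral_peanoKernel_mul {f f' f'' : ℝ → ℝ} (hx : x ∈ Icc a b)
    (hf' : ∀ t ∈ Icc a b, HasDerivWithinAt f (f' t) (Icc a b) t)
    (hf'' : ∀ t ∈ Icc a b, HasDerivWithinAt f' (f'' t) (Icc a b) t)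
    (hcont : ContinuousOn f'' (Icc a b)) :
    (b - x) * f a + (x - a) * f b - (b - a) * f x = ∫ t in a..b, peanoKernel a b x t * f'' t := by
  rw [integral_comp_peanoKernel (fun t y => y * f'' t) hx
    (continuous_peanoKernel.continuousOn.mul hcont)]
  simp only [mul_assoc, integral_const_mul]
  rw [integral_sub_left_mul_eq hx.1 (Icc_subset_Icc_right hx.2) hf' hf'' hcont,
    integral_right_sub_mul_eq hx.2 (Icc_subset_Icc_left hx.1) hf' hf'' hcont]
  ring

end PeanoKernel

theorem abs_integral_mul_le_of_integral_eq_zero {a b c m M : ℝ} {k g : ℝ → ℝ} (hab : a ≤ b)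
    (hk : ContinuousOn k (Icc a b)) (hg : ContinuousOn g (Icc a b))
    (hkc : ∫ t in a..b, k t = c * (b - a)) (hg₀ : ∫ t in a..b, g t = 0)
    (hm : ∀ t ∈ Icc a b, m ≤ g t) (hM : ∀ t ∈ Icc a b, g t ≤ M) :
    |∫ t in a..b, k t * g t| ≤ (M - m) / 2 * ∫ t in a..b, |k t - c| := by
  have hint {φ : ℝ → ℝ} (hφ : ContinuousOn φ (Icc a b)) :
      IntervalIntegrable φ MeasureTheory.volume a b :=
    hφ.intervalIntegrable_of_Icc hab
  set μ := (m + M) / 2 with hμ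
  have hshift : ∫ t in a..b, k t * g t = ∫ t in a..b, (k t - c) * (g t - μ) := by
    have hexpand (t : ℝ) : (k t - c) * (g t - μ) = (k t * g t - c * g t) - μ * (k t - c) := by
      ring
    simp only [hexpand]
    rw [integral_sub (hint (by fun_prop)) (hint (by fun_prop)),
      integral_sub (hint (by fun_prop)) (hint (by fun_prop)), integral_const_mul,
      integral_const_mul, integral_sub (hint hk) intervalIntegrable_const, hg₀, hkc,
      integral_const, smul_eq_mul]
    ring
  calc |∫ t in a..b, k t * g t|
      ≤ ∫ t in a..b, |(k t - c) * (g t - μ)| := hshift ▸ abs_integral_le_integral_abs hab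
    _ ≤ ∫ t in a..b, |k t - c| * ((M - m) / 2) := by
      refine integral_mono_on hab (hint (by fun_prop)) (hint (by fun_prop)) fun t ht => ?_
      rw [abs_mul]
      gcongr
      exact abs_le.2 ⟨by linarith [hm t ht], by linarith [hM t ht]⟩
    _ = (M - m) / 2 * ∫ t in a..b, |k t - c| := by
      rw [integral_mul_const, mul_comm]

theorem periodic_interpolation_error
    (a b m₂ M₂ : ℝ) (f f' f'' : ℝ → ℝ) (hab : a < b)
    (hf' : ∀ x ∈ Set.Icc a b, HasDerivWithinAt f (f' x) (Set.Icc a b) x)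
    (hf'' : ∀ x ∈ Set.Icc a b, HasDerivWithinAt f' (f'' x) (Set.Icc a b) x)
    (hcont : ContinuousOn f'' (Set.Icc a b))
    (hm : ∀ x ∈ Set.Icc a b, m₂ ≤ f'' x)
    (hM : ∀ x ∈ Set.Icc a b, f'' x ≤ M₂)
    (hper : f' a = f' b)
    (x : ℝ) (hx : x ∈ Set.Icc a b) :
    |(f a * (x - b) / (a - b) + f b * (x - a) / (b - a)) - f x|
      ≤ (b - a) ^ 2 * (M₂ - m₂) / 32 := by
  have hba : 0 < b - a := sub_pos.2 hab
  have hf''₀ : ∫ t in a..b, f'' t = 0 := by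
    rw [integral_eq_sub_of_hasDerivWithinAt hab.le subset_rfl hf'' hcont, hper, sub_self]
  have hkernel := abs_integral_mul_le_of_integral_eq_zero hab.le
    continuous_peanoKernel.continuousOn hcont (integral_peanoKernel hx) hf''₀ hm hM
  rw [← interpolation_error_eq_integral_peanoKernel_mul hx hf' hf'' hcont,
    integral_abs_peanoKernel_sub_mean hx] at hkernel
  have herror : f a * (x - b) / (a - b) + f b * (x - a) / (b - a) - f x =
      ((b - x) * f a + (x - a) * f b - (b - a) * f x) / (b - a) := by
    field_simp [(sub_neg.2 hab).ne]
    ring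
  have hmM : 0 ≤ M₂ - m₂ := sub_nonneg.2 ((hm a ⟨le_rfl, hab.le⟩).trans (hM a ⟨le_rfl, hab.le⟩))
  have hamgm : (x - a) * (b - x) ≤ (b - a) ^ 2 / 4 := by nlinarith [sq_nonneg (2 * x - a - b)]
  rw [herror, abs_div, abs_of_pos hba, div_le_iff₀ hba]
  calc _ ≤ (M₂ - m₂) / 2 * ((x - a) * (b - x) * (b - a) / 4) := hkernel
    _ ≤ (M₂ - m₂) / 2 * ((b - a) ^ 2 / 4 * (b - a) / 4) := by gcongr
    _ = (b - a) ^ 2 * (M₂ - m₂) / 32 * (b - a) := by ring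
end

section
/- Let f ∈ C²([a,b]) with m₂ ≤ f'' ≤ M₂ on [a,b] and f'(a) = f'(b). Then |∫_a^b f(x)dx - (b-a)(f(a)+f(b))/2| ≤ (b-a)³(M₂-m₂)/48. -/
/-!
Two integrations by parts against the Peano kernel
`K x = (x - a) * (b - x) / 2 - (b - a) ^ 2 / 12` turn the trapezoid error into `-∫ K f''`; the
boundary terms cancel because `K a = K b` and `f' a = f' b`. Since `∫ K = 0`, the integrand `f''`
may be replaced by `f'' - (m₂ + M₂) / 2`, which is bounded by `(M₂ - m₂) / 2`, so it remains to show
`∫ |K| ≤ (b - a) ^ 3 / 24`. This follows from the pointwise AM-GM bound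
`|K| ≤ 12 K ^ 2 / (b - a) ^ 2 + (b - a) ^ 2 / 48` and `∫ K ^ 2 = (b - a) ^ 5 / 720`.
-/

open intervalIntegral Set
open MeasureTheory (volume ae_of_all)

noncomputable def trapezoidKernel (a b x : ℝ) : ℝ := (x - a) * (b - x) / 2 - (b - a) ^ 2 / 12

section TrapezoidKernel

variable {a b : ℝ}

@[fun_prop]
theorem continuous_trapezoidKernel : Continuous (trapezoidKernel a b) := by
  unfold trapezoidKernel; fun_prop

theorem hasDerivAt_trapezoidKernel (x : ℝ) :
    HasDerivAt (trapezoidKernel a b) ((a + b - 2 * x) / 2) x := by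
  refine ((((hasDerivAt_id' x).sub_const a).fun_mul ((hasDerivAt_id' x).const_sub b)).div_const 2
    |>.sub_const ((b - a) ^ 2 / 12)).congr_deriv ?_
  ring

theorem integral_trapezoidKernel : ∫ x in a..b, trapezoidKernel a b x = 0 := by
  have hG (x : ℝ) : HasDerivAt
      (fun x ↦ (b - a) * (x - a) ^ 2 / 4 - (x - a) ^ 3 / 6 - (b - a) ^ 2 * (x - a) / 12)
      (trapezoidKernel a b x) x := by
    have hu := (hasDerivAt_id' x).sub_const a
    refine ((((hu.fun_pow 2).const_mul (b - a)).div_const 4).fun_sub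
      ((hu.fun_pow 3).div_const 6)).fun_sub ((hu.const_mul ((b - a) ^ 2)).div_const 12)
      |>.congr_deriv ?_
    norm_num [trapezoidKernel]
    ring
  rw [integral_eq_sub_of_hasDerivAt (fun x _ ↦ hG x)
    (continuous_trapezoidKernel.intervalIntegrable _ _)]
  ring

theorem integral_trapezoidKernel_sq :
    ∫ x in a..b, trapezoidKernel a b x ^ 2 = (b - a) ^ 5 / 720 := by
  have hG (x : ℝ) : HasDerivAt
      (fun x ↦ (x - a) ^ 5 / 20 - (b - a) * (x - a) ^ 4 / 8 + (b - a) ^ 2 * (x - a) ^ 3 / 9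
        - (b - a) ^ 3 * (x - a) ^ 2 / 24 + (b - a) ^ 4 * (x - a) / 144)
      (trapezoidKernel a b x ^ 2) x := by
    have hu := (hasDerivAt_id' x).sub_const a
    refine (((((hu.fun_pow 5).div_const 20).fun_sub
      (((hu.fun_pow 4).const_mul (b - a)).div_const 8)).fun_add
      (((hu.fun_pow 3).const_mul ((b - a) ^ 2)).div_const 9)).fun_sub
      (((hu.fun_pow 2).const_mul ((b - a) ^ 3)).div_const 24)).fun_add
      ((hu.const_mul ((b - a) ^ 4)).div_const 144) |>.congr_deriv ?_
    norm_num [trapezoidKernel]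
    ring
  rw [integral_eq_sub_of_hasDerivAt (fun x _ ↦ hG x)
    ((continuous_trapezoidKernel.pow 2).intervalIntegrable _ _)]
  ring

theorem integral_abs_trapezoidKernel_le (hab : a < b) :
    ∫ x in a..b, |trapezoidKernel a b x| ≤ (b - a) ^ 3 / 24 := by
  have hL : 0 < (b - a) ^ 2 := pow_pos (sub_pos.2 hab) 2
  have hpointwise (x : ℝ) : |trapezoidKernel a b x|
      ≤ 12 / (b - a) ^ 2 * trapezoidKernel a b x ^ 2 + (b - a) ^ 2 / 48 := by
    rw [div_mul_eq_mul_div, div_add' _ _ _ hL.ne', le_div_iff₀ hL]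
    nlinarith [sq_nonneg (|trapezoidKernel a b x| - (b - a) ^ 2 / 24),
      sq_abs (trapezoidKernel a b x)]
  have hK2 : IntervalIntegrable (fun x ↦ trapezoidKernel a b x ^ 2) volume a b :=
    (by fun_prop : Continuous fun x ↦ trapezoidKernel a b x ^ 2).intervalIntegrable _ _
  calc ∫ x in a..b, |trapezoidKernel a b x|
      ≤ ∫ x in a..b, (12 / (b - a) ^ 2 * trapezoidKernel a b x ^ 2 + (b - a) ^ 2 / 48) :=
        integral_mono_on hab.le (continuous_trapezoidKernel.abs.intervalIntegrable _ _)
          ((hK2.const_mul _).add intervalIntegrable_const) (fun x _ ↦ hpointwise x)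
    _ = 12 / (b - a) ^ 2 * ((b - a) ^ 5 / 720) + (b - a) * ((b - a) ^ 2 / 48) := by
        rw [integral_add (hK2.const_mul _) intervalIntegrable_const, integral_const_mul,
          integral_trapezoidKernel_sq, integral_const, smul_eq_mul]
    _ = 3 * (b - a) ^ 3 / 80 := by
        field_simp
        ring
    _ ≤ (b - a) ^ 3 / 24 := by linarith [pow_pos (sub_pos.2 hab) 3]

theorem integral_add_integral_trapezoidKernel_mul {f f' f'' : ℝ → ℝ} (hab : a ≤ b)
    (hf' : ∀ x ∈ Icc a b, HasDerivWithinAt f (f' x) (Icc a b) x)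
    (hf'' : ∀ x ∈ Icc a b, HasDerivWithinAt f' (f'' x) (Icc a b) x)
    (hint : IntervalIntegrable f'' volume a b) :
    (∫ x in a..b, f x) + ∫ x in a..b, trapezoidKernel a b x * f'' x
      = (b - a) * ((f a + f b) / 2) - (b - a) ^ 2 / 12 * (f' b - f' a) := by
  set Φ : ℝ → ℝ := fun x ↦ trapezoidKernel a b x * f' x - (a + b - 2 * x) / 2 * f x
  have hΦ (x : ℝ) (hx : x ∈ Icc a b) :
      HasDerivWithinAt Φ (f x + trapezoidKernel a b x * f'' x) (Icc a b) x := by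
    have hlin : HasDerivAt (fun x : ℝ ↦ (a + b - 2 * x) / 2) (-1) x :=
      (((hasDerivAt_id' x).const_mul 2).const_sub (a + b)).div_const 2 |>.congr_deriv (by ring)
    refine ((hasDerivAt_trapezoidKernel x).hasDerivWithinAt.fun_mul (hf'' x hx)).fun_sub
      (hlin.hasDerivWithinAt.fun_mul (hf' x hx)) |>.congr_deriv ?_
    ring
  have hfc : ContinuousOn f (Icc a b) := fun x hx ↦ (hf' x hx).continuousWithinAt
  have hf'c : ContinuousOn f' (Icc a b) := fun x hx ↦ (hf'' x hx).continuousWithinAt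
  have hΦc : ContinuousOn Φ (Icc a b) :=
    (continuous_trapezoidKernel.continuousOn.mul hf'c).sub
      ((by fun_prop : Continuous fun x : ℝ ↦ (a + b - 2 * x) / 2).continuousOn.mul hfc)
  have hKf'' : IntervalIntegrable (fun x ↦ trapezoidKernel a b x * f'' x) volume a b :=
    hint.continuousOn_mul continuous_trapezoidKernel.continuousOn
  rw [← integral_add (hfc.intervalIntegrable_of_Icc hab) hKf'',
    integral_eq_sub_of_hasDeriv_right_of_le hab hΦc
      (fun x hx ↦ ((hΦ x (Ioo_subset_Icc_self hx)).hasDerivAt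
        (Icc_mem_nhds hx.1 hx.2)).hasDerivWithinAt)
      ((hfc.intervalIntegrable_of_Icc hab).add hKf'')]
  simp only [Φ, trapezoidKernel]
  ring

end TrapezoidKernel

theorem abs_integral_mul_le_of_integral_eq_zero_s10 {a b m M : ℝ} {K g : ℝ → ℝ} (hab : a ≤ b)
    (hK : IntervalIntegrable K volume a b)
    (hKg : IntervalIntegrable (fun x ↦ K x * g x) volume a b) (hK0 : ∫ x in a..b, K x = 0)
    (hm : ∀ x ∈ Icc a b, m ≤ g x) (hM : ∀ x ∈ Icc a b, g x ≤ M) :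
    |∫ x in a..b, K x * g x| ≤ (M - m) / 2 * ∫ x in a..b, |K x| := by
  have hcenter : ∫ x in a..b, K x * g x = ∫ x in a..b, K x * (g x - (m + M) / 2) := by
    simp_rw [mul_sub]
    rw [integral_sub hKg (hK.mul_const _), integral_mul_const, hK0, zero_mul, sub_zero]
  have hbound : ∀ x ∈ Ioc a b, ‖K x * (g x - (m + M) / 2)‖ ≤ (M - m) / 2 * |K x| := by
    intro x hx
    have hx' : x ∈ Icc a b := Ioc_subset_Icc_self hx
    have hgx : |g x - (m + M) / 2| ≤ (M - m) / 2 := by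
      rw [abs_le]
      constructor <;> linarith [hm x hx', hM x hx']
    rw [Real.norm_eq_abs, abs_mul, mul_comm]
    exact mul_le_mul_of_nonneg_right hgx (abs_nonneg _)
  rw [hcenter, ← integral_const_mul, ← Real.norm_eq_abs]
  exact norm_integral_le_of_norm_le hab (ae_of_all _ hbound) (hK.abs.const_mul _)

theorem periodic_trapezoid_error
    (a b m₂ M₂ : ℝ) (f f' f'' : ℝ → ℝ) (hab : a < b)
    (hf' : ∀ x ∈ Set.Icc a b, HasDerivWithinAt f (f' x) (Set.Icc a b) x)
    (hf'' : ∀ x ∈ Set.Icc a b, HasDerivWithinAt f' (f'' x) (Set.Icc a b) x)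
    (hcont : ContinuousOn f'' (Set.Icc a b))
    (hm : ∀ x ∈ Set.Icc a b, m₂ ≤ f'' x)
    (hM : ∀ x ∈ Set.Icc a b, f'' x ≤ M₂)
    (hper : f' a = f' b) :
    |(∫ x in a..b, f x) - (b - a) * ((f a + f b) / 2)|
      ≤ (b - a) ^ 3 * (M₂ - m₂) / 48 := by
  have hint : IntervalIntegrable f'' volume a b := hcont.intervalIntegrable_of_Icc hab.le
  have hpeano := integral_add_integral_trapezoidKernel_mul hab.le hf' hf'' hint
  rw [hper, sub_self, mul_zero, sub_zero] at hpeano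
  have hmM : 0 ≤ M₂ - m₂ := sub_nonneg.2 <| (hm a ⟨le_rfl, hab.le⟩).trans (hM a ⟨le_rfl, hab.le⟩)
  calc |(∫ x in a..b, f x) - (b - a) * ((f a + f b) / 2)|
      = |∫ x in a..b, trapezoidKernel a b x * f'' x| := by
        rw [← hpeano, sub_add_cancel_left, abs_neg]
    _ ≤ (M₂ - m₂) / 2 * ∫ x in a..b, |trapezoidKernel a b x| :=
        abs_integral_mul_le_of_integral_eq_zero_s10 hab.le
          (continuous_trapezoidKernel.intervalIntegrable _ _)
          (hint.continuousOn_mul continuous_trapezoidKernel.continuousOn)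
          integral_trapezoidKernel hm hM
    _ ≤ (M₂ - m₂) / 2 * ((b - a) ^ 3 / 24) := by
        gcongr
        exact integral_abs_trapezoidKernel_le hab
    _ = (b - a) ^ 3 * (M₂ - m₂) / 48 := by ring
end
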